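/- arXiv:2307.04652 — 2 statements merged into one kernel-verified Lean document; each statement's English description precedes it below -/
import Mathlib

section
/- Let c be a far-polar mapping of C_n to O_r and let I be an open interval of O_r containing no image c(v_i). In the shortest-arc extension c^{sh} of the induced mapping of the exact square C_n^{#2}, the number of edges v_{i−1}v_{i+1} of C_n^{#2} whose image does not cross I is even. -/
open scoped Classical

/-- The representative in `[0, r)` of a point of the circle `O_r` (of circumference `r`),
i.e. the clockwise arc length from the base point `0`. -/
noncomputable def dlift (r : ℝ) (hr : 0 < r) (x : AddCircle r) : ℝ :=
  haveI : Fact (0 < r) := ⟨hr⟩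
  ((AddCircle.equivIco r 0 x : Set.Ico (0 : ℝ) (0 + r)) : ℝ)

/-- The representative in `(-r/2, r/2]` of a point of the circle `O_r`: the signed length of
the shortest arc from the base point (positive = clockwise). -/
noncomputable def slift (r : ℝ) (hr : 0 < r) (x : AddCircle r) : ℝ :=
  haveI : Fact (0 < r) := ⟨hr⟩
  ((AddCircle.equivIoc r (-(r / 2)) x : Set.Ioc (-(r / 2)) (-(r / 2) + r)) : ℝ)

/-- A mapping `c` of the vertices of the cycle `C_n` to the circle `O_r` is far-polar if for
each `i` the points `c (i-1)` and `c (i+1)` partition `O_r` into two arcs of unequal lengths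
and `c i` lies strictly inside the larger arc.  Here `dlift r hr (c (i+1) - c (i-1))` is the
length of the clockwise arc from `c (i-1)` to `c (i+1)`. -/
def FarPolarCycle (n : ℕ) (r : ℝ) (hr : 0 < r) (c : ZMod n → AddCircle r) : Prop :=
  ∀ i : ZMod n,
    dlift r hr (c (i + 1) - c (i - 1)) ≠ r / 2 ∧
    (if r / 2 < dlift r hr (c (i + 1) - c (i - 1)) then
      0 < dlift r hr (c i - c (i - 1)) ∧
        dlift r hr (c i - c (i - 1)) < dlift r hr (c (i + 1) - c (i - 1))
    else
      dlift r hr (c (i + 1) - c (i - 1)) < dlift r hr (c i - c (i - 1)))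

/-- The shortest arc between `x` and `y` on `O_r` (the image of the edge `xy` under the
shortest-arc extension) contains the point `t` in its interior.  If the signed shortest
displacement `slift r hr (y - x)` is nonnegative, the shorter arc runs clockwise from `x`,
otherwise clockwise from `y`. -/
def CrossSh (r : ℝ) (hr : 0 < r) (x y t : AddCircle r) : Prop :=
  if 0 ≤ slift r hr (y - x) then
    0 < dlift r hr (t - x) ∧ dlift r hr (t - x) < slift r hr (y - x)
  else
    0 < dlift r hr (t - y) ∧ dlift r hr (t - y) < -(slift r hr (y - x))

/-! ### Auxiliary lemmas -/

section Aux

variable {r : ℝ} (hr : 0 < r)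

lemma dlift_coe (b : ℝ) : dlift r hr (b : AddCircle r) = toIcoMod hr 0 b := rfl

lemma slift_coe (b : ℝ) : slift r hr (b : AddCircle r) = toIocMod hr (-(r / 2)) b := rfl

lemma coe_dlift (x : AddCircle r) : ((dlift r hr x : ℝ) : AddCircle r) = x := by
  haveI : Fact (0 < r) := ⟨hr⟩
  exact (AddCircle.equivIco r 0).symm_apply_apply x

lemma dlift_mem (x : AddCircle r) : 0 ≤ dlift r hr x ∧ dlift r hr x < r := by
  haveI : Fact (0 < r) := ⟨hr⟩
  have h := (AddCircle.equivIco r 0 x).2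
  rw [Set.mem_Ico] at h
  exact ⟨h.1, lt_of_lt_of_eq h.2 (zero_add r)⟩

lemma dlift_eq_self {b : ℝ} (h0 : 0 ≤ b) (h1 : b < r) : dlift r hr (b : AddCircle r) = b := by
  rw [dlift_coe]
  exact (toIcoMod_eq_self hr).2 ⟨h0, by linarith⟩

lemma slift_eq_self {b : ℝ} (h0 : -(r / 2) < b) (h1 : b ≤ r / 2) :
    slift r hr (b : AddCircle r) = b := by
  rw [slift_coe]
  exact (toIocMod_eq_self hr).2 ⟨h0, by linarith⟩

lemma dlift_zero : dlift r hr (0 : AddCircle r) = 0 := by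
  have h : ((0 : ℝ) : AddCircle r) = (0 : AddCircle r) := by norm_num
  rw [← h, dlift_eq_self hr le_rfl hr]

lemma dlift_pos {x : AddCircle r} (hx : x ≠ 0) : 0 < dlift r hr x := by
  rcases (dlift_mem hr x).1.lt_or_eq with h | h
  · exact h
  · exact absurd (by rw [← coe_dlift hr x, ← h]; norm_num) hx

lemma coe_sub_period (y : ℝ) : ((y - r : ℝ) : AddCircle r) = (y : AddCircle r) := by
  have h2 := AddCircle.coe_add_period r (y - r)
  rw [sub_add_cancel] at h2
  exact h2.symm

end Aux

set_option maxHeartbeats 1000000 in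
lemma dlift_key {r a b x : ℝ} (hr : 0 < r) (ha : 0 < a) (ha' : a < r) (hb : 0 < b) (hb' : b < r)
    (hx : 0 < x) (hx' : x < r) (hab : a ≠ b) (hbx : b ≠ x)
    (D E S : ℝ)
    (hD : D = if a ≤ x then x - a else x - a + r)
    (hE : E = if a < b then b - a else b - a + r)
    (hS : S = if D ≤ r / 2 then D else D - r)
    (hfar : if r / 2 < D then 0 < E ∧ E < D else D < E) :
    (¬ if 0 ≤ S then 0 < r - a ∧ r - a < S else 0 < r - x ∧ r - x < -S) ↔
      ((a < b) ↔ ¬ b < x) := by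
  subst hD hE hS
  split_ifs at hfar ⊢ <;> push_neg at * <;>
  first
  | (refine iff_of_true (fun u => ?_) ⟨fun hp => ?_, fun hq => ?_⟩ <;>
      (rcases lt_or_gt_of_ne hab with h1' | h1' <;> rcases lt_or_gt_of_ne hbx with h2' | h2' <;>
        first | linarith [hfar.1, hfar.2] | linarith [hfar]))
  | (refine iff_of_false ?_ (fun hiff => ?_)
     · push_neg
       constructor <;>
         (rcases lt_or_gt_of_ne hab with h1' | h1' <;> rcases lt_or_gt_of_ne hbx with h2' | h2' <;>
           first | linarith [hfar.1, hfar.2] | linarith [hfar])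
     · rcases lt_or_gt_of_ne hab with hp | hp
       · have hq := hiff.mp hp
         rcases lt_or_gt_of_ne hbx with h2' | h2' <;>
           first | linarith [hfar.1, hfar.2] | linarith [hfar]
       · have hq : x ≤ b := by
           by_contra hq'; push_neg at hq'
           first | linarith [hfar.1, hfar.2] | linarith [hfar]
         have := hiff.mpr hq
         linarith)

lemma parity_even (n : ℕ) (hn : 3 ≤ n) (q : ZMod n → Prop) :
    Even (Nat.card {i : ZMod n // ¬ (q (i - 1) ↔ q i)}) := by
  haveI : NeZero n := ⟨by omega⟩
  rw [Nat.card_eq_fintype_card, Fintype.card_subtype]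
  rw [even_iff_two_dvd, ← ZMod.natCast_eq_zero_iff]
  push_cast [Finset.card_filter]
  have hpt : ∀ i : ZMod n, (if ¬ (q (i - 1) ↔ q i) then (1 : ZMod 2) else 0) =
      (if q i then (1 : ZMod 2) else 0) - (if q (i - 1) then (1 : ZMod 2) else 0) := by
    intro i
    by_cases h1 : q (i - 1) <;> by_cases h2 : q i <;> simp [h1, h2] <;> decide
  rw [Finset.sum_congr rfl (fun i _ => hpt i), Finset.sum_sub_distrib, sub_eq_zero]
  exact (Fintype.sum_equiv (Equiv.subRight (1 : ZMod n))
    (fun i => if q (i - 1) then (1 : ZMod 2) else 0) (fun i => if q i then (1 : ZMod 2) else 0)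
    (fun i => rfl)).symm

/-- Let `c` be a far-polar mapping of `C_n` to `O_r` and let `t` be a point of `O_r` (standing
for a generic small interval `I`) that is not the image of any vertex.  In the shortest-arc
extension of the induced mapping of the exact square `C_n^{#2}` (whose edges join `c (i-1)`
to `c (i+1)`), the number of edges that do not cross over `t` is even. -/
theorem farPolar_noncrossing_even (n : ℕ) (hn : 3 ≤ n) (r : ℝ) (hr : 0 < r)
    (c : ZMod n → AddCircle r) (hc : FarPolarCycle n r hr c)
    (t : AddCircle r) (ht : ∀ i : ZMod n, t ≠ c i) :
    Even (Nat.card {i : ZMod n // ¬ CrossSh r hr (c (i - 1)) (c (i + 1)) t}) := by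
  haveI : NeZero n := ⟨by omega⟩
  set p : ZMod n → ℝ := fun i => dlift r hr (c i - t) with hpdef
  have hmem : ∀ i : ZMod n, 0 < p i ∧ p i < r := by
    intro i
    refine ⟨dlift_pos hr ?_, (dlift_mem hr _).2⟩
    rw [sub_ne_zero]
    exact fun h => ht i h.symm
  have hcoe : ∀ i : ZMod n, ((p i : ℝ) : AddCircle r) = c i - t := fun i => coe_dlift hr _
  have hkey : ∀ i : ZMod n,
      (¬ CrossSh r hr (c (i - 1)) (c (i + 1)) t) ↔
        ¬ ((p (i - 1) < p (i - 1 + 1)) ↔ (p i < p (i + 1))) := by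
    intro i
    rw [sub_add_cancel]
    obtain ⟨hne, hfar⟩ := hc i
    obtain ⟨hA0, hAr⟩ := hmem (i - 1)
    obtain ⟨hB0, hBr⟩ := hmem i
    obtain ⟨hX0, hXr⟩ := hmem (i + 1)
    have hcA := hcoe (i - 1)
    have hcB := hcoe i
    have hcX := hcoe (i + 1)
    set A := p (i - 1)
    set B := p i
    set X := p (i + 1)
    have hXA : ((X - A : ℝ) : AddCircle r) = c (i + 1) - c (i - 1) := by
      rw [QuotientAddGroup.mk_sub, hcA, hcX]; abel
    have hBA : ((B - A : ℝ) : AddCircle r) = c i - c (i - 1) := by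
      rw [QuotientAddGroup.mk_sub, hcA, hcB]; abel
    -- the vertices adjacent in the cycle have distinct lifts
    have hE0 : 0 < dlift r hr (c i - c (i - 1)) := by
      split_ifs at hfar with h
      · exact hfar.1
      · exact lt_of_le_of_lt (dlift_mem hr _).1 hfar
    have hAB : A ≠ B := by
      intro h
      have hz : c i - c (i - 1) = 0 := by
        rw [← hBA, h]; norm_num
      rw [hz, dlift_zero hr] at hE0
      exact lt_irrefl 0 hE0
    have hBX : B ≠ X := by
      intro h
      have heq : c i - c (i - 1) = c (i + 1) - c (i - 1) := by
        rw [← hBA, ← hXA, h]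
      rw [heq] at hfar
      split_ifs at hfar with h'
      · exact lt_irrefl _ hfar.2
      · exact lt_irrefl _ hfar
    -- compute the various lifts in terms of A, B, X
    have hD : dlift r hr (c (i + 1) - c (i - 1)) = if A ≤ X then X - A else X - A + r := by
      rw [← hXA]
      rcases le_or_gt A X with h | h
      · rw [if_pos h]
        exact dlift_eq_self hr (by linarith) (by linarith)
      · rw [if_neg (not_le.2 h), ← AddCircle.coe_add_period r (X - A)]
        exact dlift_eq_self hr (by linarith) (by linarith)
    have hE : dlift r hr (c i - c (i - 1)) = if A < B then B - A else B - A + r := by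
      rw [← hBA]
      rcases lt_or_gt_of_ne hAB with h | h
      · rw [if_pos h]
        exact dlift_eq_self hr (by linarith) (by linarith)
      · rw [if_neg (not_lt.2 h.le), ← AddCircle.coe_add_period r (B - A)]
        exact dlift_eq_self hr (by linarith) (by linarith)
    have hS : slift r hr (c (i + 1) - c (i - 1)) =
        if dlift r hr (c (i + 1) - c (i - 1)) ≤ r / 2 then dlift r hr (c (i + 1) - c (i - 1))
        else dlift r hr (c (i + 1) - c (i - 1)) - r := by
      set D := dlift r hr (c (i + 1) - c (i - 1)) with hDdef
      obtain ⟨hD0, hDr⟩ := dlift_mem hr (c (i + 1) - c (i - 1))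
      rw [← hDdef] at hD0 hDr
      rw [← coe_dlift hr (c (i + 1) - c (i - 1)), ← hDdef]
      rcases le_or_gt D (r / 2) with h | h
      · rw [if_pos h]
        exact slift_eq_self hr (by linarith) h
      · rw [if_neg (not_le.2 h), ← coe_sub_period (r := r) D]
        exact slift_eq_self hr (by linarith) (by linarith)
    have hTA : dlift r hr (t - c (i - 1)) = r - A := by
      have h1 : ((-A : ℝ) : AddCircle r) = t - c (i - 1) := by
        rw [show ((-A : ℝ) : AddCircle r) = -((A : ℝ) : AddCircle r) from
          QuotientAddGroup.mk_neg _ _, hcA, neg_sub]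
      have h2 : ((r - A : ℝ) : AddCircle r) = t - c (i - 1) := by
        rw [show (r - A : ℝ) = -A + r by ring, AddCircle.coe_add_period, h1]
      rw [← h2]
      exact dlift_eq_self hr (by linarith) (by linarith)
    have hTX : dlift r hr (t - c (i + 1)) = r - X := by
      have h1 : ((-X : ℝ) : AddCircle r) = t - c (i + 1) := by
        rw [show ((-X : ℝ) : AddCircle r) = -((X : ℝ) : AddCircle r) from
          QuotientAddGroup.mk_neg _ _, hcX, neg_sub]
      have h2 : ((r - X : ℝ) : AddCircle r) = t - c (i + 1) := by
        rw [show (r - X : ℝ) = -X + r by ring, AddCircle.coe_add_period, h1]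
      rw [← h2]
      exact dlift_eq_self hr (by linarith) (by linarith)
    unfold CrossSh
    rw [hTA, hTX]
    rw [dlift_key hr hA0 hAr hB0 hBr hX0 hXr hAB hBX
      (dlift r hr (c (i + 1) - c (i - 1))) (dlift r hr (c i - c (i - 1)))
      (slift r hr (c (i + 1) - c (i - 1))) hD hE hS hfar]
    tauto
  rw [Nat.card_congr (Equiv.subtypeEquivRight hkey)]
  exact parity_even n hn fun j => p j < p (j + 1)
end

section
/- Let G = K_{1,n} be a star with center u and leaves A, let r < 4, and let c be a circular r-coloring of (G, −) (all edges negative). Then for any cyclic arrangement C of the vertices of A, the winding number of the shortest-arc extension of c restricted to C is 0. -/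
open scoped Classical

/-!
Measure every leaf by its clockwise arc length from the centre, a real number in `[0, r)`.
A leaf at circular distance at least `1` from the centre has arc length in `[1, r - 1]`, so two
such arc lengths differ by at most `r - 2 < r / 2`; hence the shortest displacement between two
leaves is the difference of their arc lengths, and the displacements around the cycle telescope
to `0`.
-/

namespace AddCircle

variable {r : ℝ} (hr : 0 < r)

lemma slift_coe_of_mem {x : ℝ} (hx : x ∈ Set.Ioc (-(r / 2)) (r / 2)) :
    slift r hr (x : AddCircle r) = x := by
  have : Fact (0 < r) := ⟨hr⟩
  show (QuotientAddGroup.equivIocMod hr (-(r / 2)) (x : AddCircle r) : ℝ) = x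
  rw [QuotientAddGroup.equivIocMod_coe]
  exact (toIocMod_eq_self hr).mpr (by rwa [show -(r / 2) + r = r / 2 by ring])

lemma dlift_mem_Ico (x : AddCircle r) : dlift r hr x ∈ Set.Ico 0 r := by
  have : Fact (0 < r) := ⟨hr⟩
  obtain ⟨hlo, hhi⟩ := (equivIco r 0 x).2
  exact ⟨hlo, by unfold dlift; linarith⟩

lemma coe_dlift (x : AddCircle r) : ((dlift r hr x : ℝ) : AddCircle r) = x := by
  have : Fact (0 < r) := ⟨hr⟩
  exact (equivIco r 0).symm_apply_apply x

lemma norm_le_dlift (x : AddCircle r) : ‖x‖ ≤ dlift r hr x := by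
  calc ‖x‖ = ‖((dlift r hr x : ℝ) : AddCircle r)‖ := by rw [coe_dlift]
    _ ≤ |dlift r hr x| := QuotientAddGroup.norm_mk_le_norm
    _ = dlift r hr x := abs_of_nonneg (dlift_mem_Ico hr x).1

lemma norm_le_sub_dlift (x : AddCircle r) : ‖x‖ ≤ r - dlift r hr x := by
  calc ‖x‖ = ‖((dlift r hr x - r : ℝ) : AddCircle r)‖ := by
        rw [coe_sub, coe_period, sub_zero, coe_dlift]
    _ ≤ |dlift r hr x - r| := QuotientAddGroup.norm_mk_le_norm
    _ = r - dlift r hr x := by rw [abs_of_neg (by linarith [(dlift_mem_Ico hr x).2])]; ring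

lemma slift_sub_eq_dlift_sub {δ : ℝ} (hrδ : r < 4 * δ) {x y : AddCircle r}
    (hx : δ ≤ ‖x‖) (hy : δ ≤ ‖y‖) :
    slift r hr (y - x) = dlift r hr y - dlift r hr x := by
  have hxy : y - x = ((dlift r hr y - dlift r hr x : ℝ) : AddCircle r) := by
    rw [coe_sub, coe_dlift, coe_dlift]
  rw [hxy]
  apply slift_coe_of_mem
  constructor <;>
    linarith [norm_le_dlift hr x, norm_le_sub_dlift hr x, norm_le_dlift hr y,
      norm_le_sub_dlift hr y]

end AddCircle

theorem winding_star_zero_general (n : ℕ) (r : ℝ) (hr : 0 < r) (hr4 : r < 4)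
    (cu : AddCircle r) (c : Fin n → AddCircle r)
    (hc : ∀ i : Fin n, 1 ≤ dist cu (c i))
    (e : ZMod n → Fin n) :
    (∑ j ∈ Finset.range n,
        slift r hr (c (e ((j + 1 : ℕ) : ZMod n)) - c (e ((j : ℕ) : ZMod n)))) = 0 := by
  set f : ℕ → ℝ := fun j => dlift r hr (c (e (j : ZMod n)) - cu)
  have hstep : ∀ j : ℕ,
      slift r hr (c (e ((j + 1 : ℕ) : ZMod n)) - c (e ((j : ℕ) : ZMod n))) = f (j + 1) - f j := by
    intro j
    rw [← AddCircle.slift_sub_eq_dlift_sub hr (by linarith : r < 4 * 1)] <;>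
      simp only [← dist_eq_norm, dist_comm, hc, sub_sub_sub_cancel_right]
  rw [Finset.sum_congr rfl fun j _ => hstep j, Finset.sum_range_sub]
  simp only [f, ZMod.natCast_self, Nat.cast_zero, sub_self]

/-- Let `G = K_{1,n}` be the star with center mapped to `cu` and leaves `c 0, …, c (n-1)`, let
`r < 4`, and let the map be a circular `r`-coloring of `(G, -)` (all edges negative, i.e. the
center is at distance at least 1 from every leaf).  Then for any cyclic arrangement of the
leaves (given by a bijection `e : ZMod n → Fin n`), the winding number of the shortest-arc
extension of the resulting cycle is `0`:  the sum of the signed shortest displacements along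
the cycle vanishes. -/
theorem winding_star_zero (n : ℕ) (hn : 1 ≤ n) (r : ℝ) (hr : 0 < r) (hr4 : r < 4)
    (cu : AddCircle r) (c : Fin n → AddCircle r)
    (hc : ∀ i : Fin n, 1 ≤ dist cu (c i))
    (e : ZMod n → Fin n) (he : Function.Bijective e) :
    (∑ j ∈ Finset.range n,
        slift r hr (c (e ((j + 1 : ℕ) : ZMod n)) - c (e ((j : ℕ) : ZMod n)))) = 0 :=
  winding_star_zero_general n r hr hr4 cu c hc e
end
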